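/- arXiv:1210.6749 — 3 statements merged into one kernel-verified Lean document; each statement's English description precedes it below -/
import Mathlib

section
/- Let p > 1. Then for all x ∈ (0, π_p/2), (p+1)·sin_p(x)/x + 1/cos_p(x) > p + 2. -/
open Real Set Filter Topology

/-- Generalized inverse sine: `arcsin_p x = ∫₀ˣ (1 - tᵖ)^(-1/p) dt`. -/
noncomputable def arcsinp (p : ℝ) (x : ℝ) : ℝ := ∫ t in (0:ℝ)..x, (1 - t ^ p) ^ (-1 / p)

/-- Generalized π: `π_p = 2 · arcsin_p 1`. -/
noncomputable def pip (p : ℝ) : ℝ := 2 * arcsinp p 1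

/-- Generalized sine: the inverse of `arcsinp p` (as a map from `[0,1]`). -/
noncomputable def sinp (p : ℝ) : ℝ → ℝ := Function.invFunOn (arcsinp p) (Set.Icc 0 1)

/-- Generalized cosine. -/
noncomputable def cosp (p : ℝ) (x : ℝ) : ℝ := (1 - (sinp p x) ^ p) ^ (1 / p)

/-- Generalized tangent. -/
noncomputable def tanp (p : ℝ) (x : ℝ) : ℝ := sinp p x / cosp p x

/-- Generalized inverse hyperbolic sine: `arsinh_p x = ∫₀ˣ (1 + tᵖ)^(-1/p) dt`. -/
noncomputable def arsinhp (p : ℝ) (x : ℝ) : ℝ := ∫ t in (0:ℝ)..x, (1 + t ^ p) ^ (-1 / p)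

/-- Generalized hyperbolic sine: the inverse of `arsinhp p` (as a map from `[0,∞)`). -/
noncomputable def sinhp (p : ℝ) : ℝ → ℝ := Function.invFunOn (arsinhp p) (Set.Ici 0)

/-- Generalized hyperbolic cosine. -/
noncomputable def coshp (p : ℝ) (x : ℝ) : ℝ := (1 + (sinhp p x) ^ p) ^ (1 / p)

/-- Generalized hyperbolic tangent. -/
noncomputable def tanhp (p : ℝ) (x : ℝ) : ℝ := sinhp p x / coshp p x

/-!
Write `s = sin_p x`, so that `x = arcsin_p s` and `cos_p x = (1 - sᵖ)^(1/p)`. Clearing the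
positive denominators, the inequality says that
`g s = (p + 1) s cos_p + arcsin_p s - (p + 2) cos_p · arcsin_p s` is positive. Since
`g 0 = 0`, it suffices that `g' > 0` on `(0, 1)`. Using `arcsin_p y ≥ y` and, with `u = 1 - yᵖ`,
the identity `cos_p · arcsin_p' = 1`, one gets
`g' ≥ p u^(1/p) + u^(1/p - 1) + u^(-1/p) - (p + 2)`, which is positive by weighted AM-GM
(`u^(1/p - 1) + (p - 1) u^(1/p) ≥ p`) and `c + c⁻¹ > 2` for `c ≠ 1`.
-/

open intervalIntegral MeasureTheory

lemma le_rpow_one_div_sub_one_add_mul_rpow_one_div {p u : ℝ} (hp : 1 ≤ p) (hu : 0 < u) :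
    p ≤ u ^ (1 / p - 1) + (p - 1) * u ^ (1 / p) := by
  have hp0 : 0 < p := by linarith
  have hamgm : (u ^ (1 / p - 1)) ^ (1 / p) * (u ^ (1 / p)) ^ (1 - 1 / p) ≤
      1 / p * u ^ (1 / p - 1) + (1 - 1 / p) * u ^ (1 / p) :=
    geom_mean_le_arith_mean2_weighted (by positivity)
      (by rw [sub_nonneg, div_le_one hp0]; linarith) (by positivity) (by positivity) (by ring)
  have hgeom : (u ^ (1 / p - 1)) ^ (1 / p) * (u ^ (1 / p)) ^ (1 - 1 / p) = 1 := by
    rw [← rpow_mul hu.le, ← rpow_mul hu.le, ← rpow_add hu,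
      show (1 / p - 1) * (1 / p) + 1 / p * (1 - 1 / p) = 0 by ring, rpow_zero]
  rw [hgeom] at hamgm
  calc p = p * 1 := (mul_one p).symm
    _ ≤ p * (1 / p * u ^ (1 / p - 1) + (1 - 1 / p) * u ^ (1 / p)) := by gcongr
    _ = u ^ (1 / p - 1) + (p - 1) * u ^ (1 / p) := by field_simp

lemma add_two_lt_mul_rpow_add_rpow_add_rpow {p u : ℝ} (hp : 1 ≤ p) (hu0 : 0 < u) (hu1 : u < 1) :
    p + 2 < p * u ^ (1 / p) + u ^ (1 / p - 1) + u ^ (-1 / p) := by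
  set c := u ^ (1 / p)
  have hc0 : 0 < c := rpow_pos_of_pos hu0 _
  have hc1 : c < 1 := rpow_lt_one hu0.le hu1 (one_div_pos.mpr (by linarith))
  have hinv : u ^ (-1 / p) = c⁻¹ := by rw [neg_div, rpow_neg hu0.le]
  have htwo : 2 < c + c⁻¹ := by
    rw [show c + c⁻¹ = (c * c + 1) / c by field_simp, lt_div_iff₀ hc0]
    nlinarith
  have hamgm := le_rpow_one_div_sub_one_add_mul_rpow_one_div hp hu0
  rw [hinv]
  linarith

section OneSubRpow

variable {p t : ℝ}

lemma one_sub_rpow_pos (hp : 0 < p) (ht0 : 0 ≤ t) (ht1 : t < 1) : 0 < 1 - t ^ p :=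
  sub_pos.mpr (rpow_lt_one ht0 ht1 hp)

lemma continuousAt_one_sub_rpow_rpow (q : ℝ) (hp : 0 < p) (ht0 : 0 ≤ t) (ht1 : t < 1) :
    ContinuousAt (fun y : ℝ => (1 - y ^ p) ^ q) t :=
  (continuousAt_const.sub (continuousAt_rpow_const t p (Or.inr hp.le))).rpow_const
    (Or.inl (one_sub_rpow_pos hp ht0 ht1).ne')

lemma continuousOn_one_sub_rpow_rpow (q : ℝ) (hp : 0 < p) {s : ℝ} (hs : s < 1) :
    ContinuousOn (fun y : ℝ => (1 - y ^ p) ^ q) (Icc 0 s) := fun _ ht =>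
  (continuousAt_one_sub_rpow_rpow q hp ht.1 (ht.2.trans_lt hs)).continuousWithinAt

lemma one_le_one_sub_rpow_rpow_neg_one_div (hp : 0 < p) (ht0 : 0 ≤ t) (ht1 : t < 1) :
    1 ≤ (1 - t ^ p) ^ (-1 / p) :=
  one_le_rpow_of_pos_of_le_one_of_nonpos (one_sub_rpow_pos hp ht0 ht1)
    (sub_le_self _ (rpow_nonneg ht0 p)) (div_nonpos_of_nonpos_of_nonneg (by norm_num) hp.le)

lemma hasDerivAt_one_sub_rpow_rpow_one_div (hp : 0 < p) (ht0 : 0 < t) (ht1 : t < 1) :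
    HasDerivAt (fun y : ℝ => (1 - y ^ p) ^ (1 / p))
      (-(t ^ (p - 1) * (1 - t ^ p) ^ (1 / p - 1))) t := by
  have hinner : HasDerivAt (fun y : ℝ => 1 - y ^ p) (-(p * t ^ (p - 1))) t :=
    (hasDerivAt_rpow_const (Or.inl ht0.ne')).const_sub 1
  convert hinner.rpow_const (p := 1 / p) (Or.inl (one_sub_rpow_pos hp ht0.le ht1).ne') using 1
  field_simp

end OneSubRpow

section Arcsinp

variable {p : ℝ}

lemma intervalIntegrable_one_sub_rpow_rpow (q : ℝ) (hp : 0 < p) {b : ℝ} (hb0 : 0 ≤ b)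
    (hb1 : b < 1) : IntervalIntegrable (fun t : ℝ => (1 - t ^ p) ^ q) volume 0 b :=
  (continuousOn_one_sub_rpow_rpow q hp hb1).intervalIntegrable_of_Icc hb0

lemma continuousOn_arcsinp {b : ℝ} (hb : 0 ≤ b)
    (hint : IntervalIntegrable (fun t : ℝ => (1 - t ^ p) ^ (-1 / p)) volume 0 b) :
    ContinuousOn (arcsinp p) (Icc 0 b) := by
  have hint' : IntegrableOn (fun t : ℝ => (1 - t ^ p) ^ (-1 / p)) (uIcc 0 b) := by
    rw [uIcc_of_le hb, integrableOn_Icc_iff_integrableOn_Ioc]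
    exact hint.1
  have := continuousOn_primitive_interval hint'
  rwa [uIcc_of_le hb] at this

lemma continuousOn_arcsinp_of_lt_one (hp : 0 < p) {b : ℝ} (hb0 : 0 ≤ b) (hb1 : b < 1) :
    ContinuousOn (arcsinp p) (Icc 0 b) :=
  continuousOn_arcsinp hb0 (intervalIntegrable_one_sub_rpow_rpow _ hp hb0 hb1)

lemma hasDerivAt_arcsinp (hp : 0 < p) {x : ℝ} (hx0 : 0 < x) (hx1 : x < 1) :
    HasDerivAt (arcsinp p) ((1 - x ^ p) ^ (-1 / p)) x :=
  integral_hasDerivAt_right (intervalIntegrable_one_sub_rpow_rpow _ hp hx0.le hx1)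
    (ContinuousOn.stronglyMeasurableAtFilter isOpen_Ioo
      (fun _ ht => (continuousAt_one_sub_rpow_rpow _ hp ht.1.le ht.2).continuousWithinAt)
      _ ⟨hx0, hx1⟩)
    (continuousAt_one_sub_rpow_rpow _ hp hx0.le hx1)

lemma le_arcsinp (hp : 0 < p) {y : ℝ} (hy0 : 0 ≤ y) (hy1 : y < 1) : y ≤ arcsinp p y := by
  have := integral_mono_on hy0 intervalIntegrable_const
    (intervalIntegrable_one_sub_rpow_rpow _ hp hy0 hy1)
    (fun t ht => one_le_one_sub_rpow_rpow_neg_one_div hp ht.1 (ht.2.trans_lt hy1))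
  simpa [arcsinp] using this

lemma arcsinp_zero : arcsinp p 0 = 0 := integral_same

lemma sinp_mem_Ioo_and_arcsinp_sinp {x : ℝ} (hx : x ∈ Ioo 0 (arcsinp p 1)) :
    sinp p x ∈ Ioo 0 1 ∧ arcsinp p (sinp p x) = x := by
  -- `arcsinp p 1 ≠ 0` rules out the junk value of a non-integrable integral.
  have hint : IntervalIntegrable (fun t : ℝ => (1 - t ^ p) ^ (-1 / p)) volume 0 1 := by
    by_contra h
    have h0 : arcsinp p 1 = 0 := integral_undef h
    linarith [hx.1, hx.2]
  have hex : ∃ a ∈ Icc (0 : ℝ) 1, arcsinp p a = x :=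
    intermediate_value_Icc zero_le_one (continuousOn_arcsinp zero_le_one hint)
      (by rw [arcsinp_zero]; exact Ioo_subset_Icc_self hx)
  have hmem : sinp p x ∈ Icc (0 : ℝ) 1 := Function.invFunOn_mem hex
  have hinv : arcsinp p (sinp p x) = x := Function.invFunOn_eq hex
  refine ⟨⟨hmem.1.lt_of_ne ?_, hmem.2.lt_of_ne ?_⟩, hinv⟩
  · rintro h
    rw [← h, arcsinp_zero] at hinv
    exact hx.1.ne hinv
  · rintro h
    rw [h] at hinv
    exact hx.2.ne' hinv

end Arcsinp

section Gap

variable {p : ℝ}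

noncomputable def arcsinpGap (p y : ℝ) : ℝ :=
  (p + 1) * (y * (1 - y ^ p) ^ (1 / p)) + arcsinp p y -
    (p + 2) * ((1 - y ^ p) ^ (1 / p) * arcsinp p y)

lemma arcsinpGap_zero : arcsinpGap p 0 = 0 := by
  simp [arcsinpGap, arcsinp_zero]

lemma continuousOn_arcsinpGap (hp : 0 < p) {s : ℝ} (hs0 : 0 ≤ s) (hs1 : s < 1) :
    ContinuousOn (arcsinpGap p) (Icc 0 s) := by
  have hC := continuousOn_one_sub_rpow_rpow (1 / p) hp hs1
  have hA := continuousOn_arcsinp_of_lt_one hp hs0 hs1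
  exact ((continuousOn_const.mul (continuousOn_id.mul hC)).add hA).sub
    (continuousOn_const.mul (hC.mul hA))

lemma exists_hasDerivAt_arcsinpGap_pos (hp : 1 ≤ p) {x : ℝ} (hx0 : 0 < x) (hx1 : x < 1) :
    ∃ g', HasDerivAt (arcsinpGap p) g' x ∧ 0 < g' := by
  have hp0 : 0 < p := by linarith
  have hC := hasDerivAt_one_sub_rpow_rpow_one_div hp0 hx0 hx1
  have hA := hasDerivAt_arcsinp hp0 hx0 hx1
  refine ⟨_, ((((hasDerivAt_id x).mul hC).const_mul (p + 1)).add hA).sub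
    ((hC.mul hA).const_mul (p + 2)), ?_⟩
  set u := 1 - x ^ p
  set w := x ^ (p - 1) * u ^ (1 / p - 1)
  have hu0 : 0 < u := one_sub_rpow_pos hp0 hx0.le hx1
  have hu1 : u < 1 := sub_lt_self 1 (rpow_pos_of_pos hx0 p)
  have hCA : u ^ (1 / p) * u ^ (-1 / p) = 1 := by
    rw [← rpow_add hu0, ← add_div, add_neg_cancel, zero_div, rpow_zero]
  have hub : u * u ^ (1 / p - 1) = u ^ (1 / p) := by
    rw [← rpow_one_add' hu0.le (by simp [hp0.ne'])]
    ring_nf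
  have hxp : x * x ^ (p - 1) = 1 - u := by
    rw [← rpow_one_add' hx0.le (by linarith), add_sub_cancel]
    ring
  have hxw : x * w = u ^ (1 / p - 1) - u ^ (1 / p) := by
    rw [← mul_assoc, hxp]
    linear_combination -hub
  have hAw : x * w ≤ arcsinp p x * w :=
    mul_le_mul_of_nonneg_right (le_arcsinp hp0 hx0.le hx1) (by positivity)
  have hderiv : (p + 1) * (1 * u ^ (1 / p) + x * -w) + u ^ (-1 / p) -
        (p + 2) * (-w * arcsinp p x + u ^ (1 / p) * u ^ (-1 / p)) =
      p * u ^ (1 / p) + u ^ (1 / p - 1) + u ^ (-1 / p) - (p + 2) +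
        (p + 2) * (arcsinp p x * w - x * w) := by
    linear_combination hxw - (p + 2) * hCA
  simp only [id]
  rw [hderiv]
  have hmain := add_two_lt_mul_rpow_add_rpow_add_rpow hp hu0 hu1
  have hcorr := mul_nonneg (by linarith : (0 : ℝ) ≤ p + 2) (sub_nonneg.mpr hAw)
  linarith

lemma arcsinpGap_pos (hp : 1 ≤ p) {s : ℝ} (hs0 : 0 < s) (hs1 : s < 1) :
    0 < arcsinpGap p s := by
  have hmono : StrictMonoOn (arcsinpGap p) (Icc 0 s) := by
    refine strictMonoOn_of_deriv_pos (convex_Icc 0 s)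
      (continuousOn_arcsinpGap (by linarith) hs0.le hs1) fun x hx => ?_
    rw [interior_Icc] at hx
    obtain ⟨g', hg', hpos⟩ := exists_hasDerivAt_arcsinpGap_pos hp hx.1 (hx.2.trans hs1)
    rwa [hg'.deriv]
  simpa [arcsinpGap_zero] using
    hmono (left_mem_Icc.mpr hs0.le) (right_mem_Icc.mpr hs0.le) hs0

end Gap

lemma add_two_lt_mul_div_arcsinp_add_one_div {p s : ℝ} (hp : 1 ≤ p) (hs0 : 0 < s)
    (hs1 : s < 1) :
    p + 2 < (p + 1) * (s / arcsinp p s) + 1 / (1 - s ^ p) ^ (1 / p) := by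
  have hp0 : 0 < p := by linarith
  have hA : 0 < arcsinp p s := hs0.trans_le (le_arcsinp hp0 hs0.le hs1)
  have hC : 0 < (1 - s ^ p) ^ (1 / p) := rpow_pos_of_pos (one_sub_rpow_pos hp0 hs0.le hs1) _
  have hgap : (p + 1) * (s / arcsinp p s) + 1 / (1 - s ^ p) ^ (1 / p) - (p + 2) =
      arcsinpGap p s / (arcsinp p s * (1 - s ^ p) ^ (1 / p)) := by
    rw [arcsinpGap]
    field_simp
  have := div_pos (arcsinpGap_pos hp hs0 hs1) (mul_pos hA hC)
  linarith

theorem stmt6 (p : ℝ) (hp : 1 < p) :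
    ∀ x ∈ Set.Ioo 0 (pip p / 2),
      (p + 1) * (sinp p x / x) + 1 / cosp p x > p + 2 := by
  intro x hx
  rw [pip, mul_div_cancel_left₀ _ two_ne_zero] at hx
  obtain ⟨⟨hs0, hs1⟩, hinv⟩ := sinp_mem_Ioo_and_arcsinp_sinp hx
  have := add_two_lt_mul_div_arcsinp_add_one_div hp.le hs0 hs1
  rwa [hinv] at this
end

section
/- Let p > 1. Then for all x > 0, (p+1)·sinh_p(x)/x + 1/cosh_p(x) > p + 2. -/
open Real Set Filter Topology

/-!
Write `s = sinh_p x`, `g t = (1 + t^p)^(-1/p)` and `G = arsinh_p`, so that `x = G s` and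
`1 / cosh_p x = g s`; the claim is `F s > 0` for `F = (p + 1) id + (g - (p + 2)) G`.
As `F 0 = 0` it suffices that `F' > 0`. Now `g' = -t^(p-1) g^(p+1) ≤ 0` and `G t ≤ t`, so
`g' G ≥ -t^p g^(p+1) = g^(p+1) - g`, and Bernoulli's inequality `g^p ≥ 1 + p (g - 1)` then gives
`F' ≥ (p + 1) (1 - g)^2 > 0`.
-/

section

variable {p : ℝ}

/-- Made even so that it is continuous on all of `ℝ`; it agrees with the integrand of `arsinhp`
on `[0, ∞)`. -/
noncomputable def arsinhpIntegrand (p t : ℝ) : ℝ := (1 + |t| ^ p) ^ (-1 / p)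

noncomputable def oddArsinhp (p y : ℝ) : ℝ := ∫ t in (0:ℝ)..y, arsinhpIntegrand p t

/-- The `F` of the header; at `y = sinhp p x` it is `x` times the difference of the two sides. -/
noncomputable def arsinhpDefect (p y : ℝ) : ℝ :=
  (p + 1) * y + (arsinhpIntegrand p y - (p + 2)) * oddArsinhp p y

lemma arsinhpIntegrand_pos (t : ℝ) : 0 < arsinhpIntegrand p t := by
  unfold arsinhpIntegrand; positivity

lemma arsinhpIntegrand_le_one (hp : 0 < p) (t : ℝ) : arsinhpIntegrand p t ≤ 1 :=
  rpow_le_one_of_one_le_of_nonpos (le_add_of_nonneg_right (by positivity))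
    (div_nonpos_of_nonpos_of_nonneg (by norm_num) hp.le)

lemma arsinhpIntegrand_lt_one (hp : 0 < p) {t : ℝ} (ht : t ≠ 0) : arsinhpIntegrand p t < 1 :=
  rpow_lt_one_of_one_lt_of_neg (lt_add_of_pos_right _ (rpow_pos_of_pos (abs_pos.2 ht) p))
    (div_neg_of_neg_of_pos (by norm_num) hp)

lemma arsinhpIntegrand_rpow (hp : 0 < p) (t : ℝ) :
    arsinhpIntegrand p t ^ p = (1 + |t| ^ p)⁻¹ := by
  rw [arsinhpIntegrand, ← rpow_mul (by positivity), div_mul_cancel₀ _ hp.ne', rpow_neg_one]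

lemma continuous_arsinhpIntegrand (hp : 0 < p) : Continuous (arsinhpIntegrand p) :=
  (continuous_const.add (continuous_abs.rpow_const fun _ => Or.inr hp.le)).rpow_const
    fun t => Or.inl (add_pos_of_pos_of_nonneg one_pos (by positivity)).ne'

lemma hasDerivAt_arsinhpIntegrand (hp : 0 < p) {y : ℝ} (hy : 0 < y) :
    HasDerivAt (arsinhpIntegrand p) (-(y ^ (p - 1) * arsinhpIntegrand p y ^ (p + 1))) y := by
  have hb : 0 < 1 + y ^ p := by positivity
  have h := ((hasDerivAt_rpow_const (p := p) (Or.inl hy.ne')).const_add 1).rpow_const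
    (p := -1 / p) (Or.inl hb.ne')
  have hev : arsinhpIntegrand p =ᶠ[𝓝 y] fun t => (1 + t ^ p) ^ (-1 / p) := by
    filter_upwards [eventually_gt_nhds hy] with t ht
    rw [arsinhpIntegrand, abs_of_pos ht]
  refine (h.congr_of_eventuallyEq hev).congr_deriv ?_
  rw [arsinhpIntegrand, abs_of_pos hy, ← rpow_mul hb.le,
    show -1 / p * (p + 1) = -1 / p - 1 by field_simp; ring]
  field_simp

lemma hasDerivAt_oddArsinhp (hp : 0 < p) (y : ℝ) :
    HasDerivAt (oddArsinhp p) (arsinhpIntegrand p y) y :=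
  ((continuous_arsinhpIntegrand hp).integral_hasStrictDerivAt 0 y).hasDerivAt

lemma continuous_oddArsinhp (hp : 0 < p) : Continuous (oddArsinhp p) :=
  continuous_iff_continuousAt.mpr fun y => (hasDerivAt_oddArsinhp hp y).continuousAt

@[simp] lemma oddArsinhp_zero : oddArsinhp p 0 = 0 := intervalIntegral.integral_same

lemma strictMono_oddArsinhp (hp : 0 < p) : StrictMono (oddArsinhp p) :=
  strictMono_of_hasDerivAt_pos (hasDerivAt_oddArsinhp hp) arsinhpIntegrand_pos

lemma arsinhp_eq_oddArsinhp {y : ℝ} (hy : 0 ≤ y) : arsinhp p y = oddArsinhp p y := by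
  refine intervalIntegral.integral_congr fun t ht => ?_
  rw [uIcc_of_le hy] at ht
  simp [arsinhpIntegrand, abs_of_nonneg ht.1]

lemma oddArsinhp_le_self (hp : 0 < p) {y : ℝ} (hy : 0 ≤ y) : oddArsinhp p y ≤ y := by
  simpa [oddArsinhp] using intervalIntegral.integral_mono_on hy
    ((continuous_arsinhpIntegrand hp).intervalIntegrable 0 y)
    (intervalIntegrable_const (μ := MeasureTheory.volume))
    fun t _ => arsinhpIntegrand_le_one hp t

/-- The integrand is at least `2^(-1/p) / t` on `[1, ∞)`, so `arsinh_p` grows logarithmically. -/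
lemma mul_log_le_oddArsinhp (hp : 0 < p) {M : ℝ} (hM : 1 ≤ M) :
    2 ^ (-1 / p) * log M ≤ oddArsinhp p M := by
  have hint : ∀ a b, IntervalIntegrable (arsinhpIntegrand p) MeasureTheory.volume a b :=
    (continuous_arsinhpIntegrand hp).intervalIntegrable
  have hbound : ∀ t ∈ Icc 1 M, 2 ^ (-1 / p) * t⁻¹ ≤ arsinhpIntegrand p t := by
    rintro t ⟨ht1, -⟩
    have ht0 : 0 < t := one_pos.trans_le ht1
    calc 2 ^ (-1 / p) * t⁻¹ = (2 * t ^ p) ^ (-1 / p) := by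
          rw [mul_rpow two_pos.le (by positivity), ← rpow_mul ht0.le,
            mul_div_cancel₀ _ hp.ne', rpow_neg_one]
      _ ≤ arsinhpIntegrand p t := by
          refine rpow_le_rpow_of_nonpos (by positivity) ?_
            (div_nonpos_of_nonpos_of_nonneg (by norm_num) hp.le)
          rw [abs_of_pos ht0]
          linarith [one_le_rpow ht1 hp.le]
  have hinv : IntervalIntegrable (fun t : ℝ => 2 ^ (-1 / p) * t⁻¹) MeasureTheory.volume 1 M :=
    (intervalIntegral.intervalIntegrable_inv
      (fun t ht => by rw [uIcc_of_le hM] at ht; exact (one_pos.trans_le ht.1).ne')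
      continuousOn_id).const_mul _
  have hG1 : 0 ≤ oddArsinhp p 1 := oddArsinhp_zero (p := p) ▸ (strictMono_oddArsinhp hp).monotone zero_le_one
  calc 2 ^ (-1 / p) * log M = ∫ t in (1:ℝ)..M, 2 ^ (-1 / p) * t⁻¹ := by
        rw [intervalIntegral.integral_const_mul,
          integral_inv_of_pos one_pos (one_pos.trans_le hM), div_one]
    _ ≤ ∫ t in (1:ℝ)..M, arsinhpIntegrand p t :=
        intervalIntegral.integral_mono_on hM hinv (hint 1 M) hbound
    _ ≤ oddArsinhp p 1 + ∫ t in (1:ℝ)..M, arsinhpIntegrand p t := le_add_of_nonneg_left hG1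
    _ = oddArsinhp p M := intervalIntegral.integral_add_adjacent_intervals (hint 0 1) (hint 1 M)

lemma arsinhp_sinhp (hp : 0 < p) {x : ℝ} (hx : 0 ≤ x) :
    0 ≤ sinhp p x ∧ arsinhp p (sinhp p x) = x := by
  have hM : 1 ≤ exp (x / 2 ^ (-1 / p)) := one_le_exp (by positivity)
  have hxM : x ∈ Icc (oddArsinhp p 0) (oddArsinhp p (exp (x / 2 ^ (-1 / p)))) := by
    refine ⟨by simpa using hx, ?_⟩
    simpa [mul_div_cancel₀ _ (rpow_pos_of_pos two_pos (-1 / p)).ne'] using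
      mul_log_le_oddArsinhp hp hM
  obtain ⟨y, hy, hyx⟩ := intermediate_value_Icc (zero_le_one.trans hM)
    (continuous_oddArsinhp hp).continuousOn hxM
  have hsurj : ∃ a ∈ Ici 0, arsinhp p a = x := ⟨y, hy.1, hyx ▸ arsinhp_eq_oddArsinhp hy.1⟩
  exact ⟨Function.invFunOn_mem hsurj, Function.invFunOn_eq hsurj⟩

lemma sinhp_pos (hp : 0 < p) {x : ℝ} (hx : 0 < x) : 0 < sinhp p x := by
  obtain ⟨hs, hsx⟩ := arsinhp_sinhp hp hx.le
  refine hs.lt_of_ne fun h => hx.ne ?_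
  rw [← hsx, ← h, arsinhp_eq_oddArsinhp le_rfl, oddArsinhp_zero]

lemma one_div_coshp {x : ℝ} (hx : 0 ≤ sinhp p x) :
    1 / coshp p x = arsinhpIntegrand p (sinhp p x) := by
  rw [coshp, arsinhpIntegrand, abs_of_nonneg hx, neg_div, rpow_neg (by positivity), one_div, one_div]

lemma hasDerivAt_arsinhpDefect (hp : 0 < p) {y : ℝ} (hy : 0 < y) :
    HasDerivAt (arsinhpDefect p)
      (p + 1 - y ^ (p - 1) * arsinhpIntegrand p y ^ (p + 1) * oddArsinhp p y
        + (arsinhpIntegrand p y - (p + 2)) * arsinhpIntegrand p y) y :=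
  (((hasDerivAt_id y).const_mul (p + 1)).add
    (((hasDerivAt_arsinhpIntegrand hp hy).sub_const (p + 2)).mul
      (hasDerivAt_oddArsinhp hp y))).congr_deriv (by ring)

lemma deriv_arsinhpDefect_pos (hp : 1 ≤ p) {y : ℝ} (hy : 0 < y) :
    0 < deriv (arsinhpDefect p) y := by
  have hp0 : 0 < p := one_pos.trans_le hp
  rw [(hasDerivAt_arsinhpDefect hp0 hy).deriv]
  set g := arsinhpIntegrand p y
  have hg0 : 0 < g := arsinhpIntegrand_pos y
  have hg1 : g < 1 := arsinhpIntegrand_lt_one hp0 hy.ne'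
  have hgp : g ^ (p + 1) = g ^ p * g := rpow_add_one hg0.ne' p
  have hypg : y ^ p * g ^ (p + 1) = g - g ^ (p + 1) := by
    have h := arsinhpIntegrand_rpow hp0 y
    rw [abs_of_pos hy] at h
    rw [hgp, h]
    field_simp
    ring
  have hG : y ^ (p - 1) * g ^ (p + 1) * oddArsinhp p y ≤ y ^ p * g ^ (p + 1) := by
    calc y ^ (p - 1) * g ^ (p + 1) * oddArsinhp p y ≤ y ^ (p - 1) * g ^ (p + 1) * y :=
          mul_le_mul_of_nonneg_left (oddArsinhp_le_self hp0 hy.le) (by positivity)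
      _ = y ^ p * g ^ (p + 1) := by rw [rpow_sub_one hy.ne']; field_simp
  have hbernoulli : 1 + p * (g - 1) ≤ g ^ p := by
    simpa using one_add_mul_self_le_rpow_one_add (s := g - 1) (by linarith) hp
  nlinarith [mul_le_mul_of_nonneg_left hbernoulli hg0.le, mul_pos (sub_pos.2 hg1) (sub_pos.2 hg1)]

lemma arsinhpDefect_pos (hp : 1 ≤ p) {y : ℝ} (hy : 0 < y) : 0 < arsinhpDefect p y := by
  have hp0 : 0 < p := one_pos.trans_le hp
  have hmono : StrictMonoOn (arsinhpDefect p) (Ici 0) := by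
    refine strictMonoOn_of_deriv_pos (convex_Ici 0) (Continuous.continuousOn ?_) fun t ht => ?_
    · exact (continuous_const.mul continuous_id).add
        (((continuous_arsinhpIntegrand hp0).sub continuous_const).mul (continuous_oddArsinhp hp0))
    · rw [interior_Ici] at ht
      exact deriv_arsinhpDefect_pos hp ht
  simpa [arsinhpDefect] using hmono self_mem_Ici hy.le hy

end

theorem stmt7 (p : ℝ) (hp : 1 < p) :
    ∀ x > (0:ℝ), (p + 1) * (sinhp p x / x) + 1 / coshp p x > p + 2 := by
  intro x hx
  have hp0 : 0 < p := one_pos.trans hp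
  have hs := sinhp_pos hp0 hx
  have hF := arsinhpDefect_pos hp.le hs
  rw [arsinhpDefect, ← arsinhp_eq_oddArsinhp hs.le, (arsinhp_sinhp hp0 hx.le).2,
    ← one_div_coshp hs.le] at hF
  have h := div_pos hF hx
  rw [add_div, mul_div_assoc, mul_div_cancel_right₀ _ hx.ne'] at h
  linarith
end

section
/- Let 1 < p ≤ 2. Then for all x > 0, sinh_p(x)/x < (cosh_p(x) + p)/(1 + p). -/
open Real Set Filter Topology

section Aux

open scoped NNReal

variable {p : ℝ}

lemma aux_base_pos (hp : 1 < p) {t : ℝ} (ht : -1 < t) : 0 < 1 + t ^ p := by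
  rcases le_or_gt 0 t with h | h
  · have : 0 ≤ t ^ p := Real.rpow_nonneg h p
    linarith
  · have habs : |t| < 1 := abs_lt.2 ⟨ht, by linarith⟩
    have h1 : |t ^ p| ≤ |t| ^ p := Real.abs_rpow_le_abs_rpow t p
    have h2 : |t| ^ p < 1 :=
      Real.rpow_lt_one (abs_nonneg t) habs (by linarith)
    have := neg_abs_le (t ^ p)
    linarith [h1.trans_lt h2]

lemma aux_contAt (hp : 1 < p) {t : ℝ} (ht : -1 < t) :
    ContinuousAt (fun t : ℝ => (1 + t ^ p) ^ (-1 / p)) t := by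
  have hp0 : (0:ℝ) ≤ p := by linarith
  have h1 : ContinuousAt (fun t : ℝ => 1 + t ^ p) t :=
    continuousAt_const.add (Real.continuousAt_rpow_const t p (Or.inr hp0))
  have hpos : (0:ℝ) < 1 + t ^ p := aux_base_pos hp ht
  exact h1.rpow_const (Or.inl hpos.ne')

lemma aux_intble (hp : 1 < p) {a b : ℝ} (ha : 0 ≤ a) (hb : 0 ≤ b) :
    IntervalIntegrable (fun t : ℝ => (1 + t ^ p) ^ (-1 / p)) MeasureTheory.volume a b := by
  apply ContinuousOn.intervalIntegrable
  intro t ht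
  have ht0 : 0 ≤ t := by
    rcases le_total a b with h | h
    · rw [uIcc_of_le h] at ht; exact le_trans ha ht.1
    · rw [uIcc_of_ge h] at ht; exact le_trans hb ht.1
  exact (aux_contAt hp (by linarith)).continuousWithinAt

lemma arsinhp_hasDerivAt (hp : 1 < p) {s : ℝ} (hs : 0 ≤ s) :
    HasDerivAt (arsinhp p) ((1 + s ^ p) ^ (-1 / p)) s := by
  apply intervalIntegral.integral_hasDerivAt_right (aux_intble hp le_rfl hs)
  · exact ContinuousAt.stronglyMeasurableAtFilter isOpen_Ioi
      (fun t ht => aux_contAt hp ht) s (by simpa using by linarith : s ∈ Ioi (-1:ℝ))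
  · exact aux_contAt hp (by linarith)

lemma arsinhp_zero : arsinhp p 0 = 0 := intervalIntegral.integral_same

lemma log_le_arsinhp (hp : 1 < p) {s : ℝ} (hs : 0 ≤ s) :
    Real.log (1 + s) ≤ arsinhp p s := by
  have h1s : (0:ℝ) < 1 + s := by linarith
  have hlog : Real.log (1 + s) = ∫ t in (0:ℝ)..s, (1 + t)⁻¹ := by
    have h := intervalIntegral.integral_comp_add_left (a := (0:ℝ)) (b := s)
      (fun x : ℝ => x⁻¹) 1
    rw [h, add_zero]
    rw [integral_inv (by
      intro hmem
      rw [uIcc_of_le (by linarith : (1:ℝ) ≤ 1 + s)] at hmem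
      linarith [hmem.1])]
    rw [div_one]
  rw [hlog]
  apply intervalIntegral.integral_mono_on hs
  · apply ContinuousOn.intervalIntegrable
    intro t ht
    rw [uIcc_of_le hs] at ht
    have hpos : (0:ℝ) < 1 + t := by linarith [ht.1]
    exact ((continuousAt_const.add continuousAt_id).inv₀ hpos.ne').continuousWithinAt
  · exact aux_intble hp le_rfl hs
  · intro t ht
    have ht0 : 0 ≤ t := ht.1
    have h1t : (0:ℝ) < 1 + t := by linarith
    have hup : 0 < 1 + t ^ p := aux_base_pos hp (by linarith)
    have hpow : 1 + t ^ p ≤ (1 + t) ^ p := by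
      have h := NNReal.add_rpow_le_rpow_add (1 : ℝ≥0) t.toNNReal hp.le
      have h' := (NNReal.coe_le_coe.2 h)
      push_cast at h'
      rw [Real.coe_toNNReal t ht0] at h'
      simpa using h'
    have hroot : (1 + t ^ p) ^ (1/p) ≤ 1 + t := by
      calc (1 + t ^ p) ^ (1/p) ≤ ((1 + t) ^ p) ^ (1/p) :=
            Real.rpow_le_rpow hup.le hpow (by positivity)
        _ = 1 + t := by
            rw [one_div, Real.rpow_rpow_inv h1t.le (by linarith : p ≠ 0)]
    have hrpos : 0 < (1 + t ^ p) ^ (1/p) := Real.rpow_pos_of_pos hup _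
    have heq : (1 + t ^ p) ^ (-1/p) = ((1 + t ^ p) ^ (1/p))⁻¹ := by
      rw [neg_div, Real.rpow_neg hup.le]
    rw [heq]
    exact inv_anti₀ hrpos hroot

lemma arsinhp_contOn (hp : 1 < p) : ContinuousOn (arsinhp p) (Ici 0) :=
  fun s hs => ((arsinhp_hasDerivAt hp hs).continuousAt).continuousWithinAt

lemma sinhp_spec (hp : 1 < p) {x : ℝ} (hx : 0 < x) :
    0 < sinhp p x ∧ arsinhp p (sinhp p x) = x := by
  have hs₀ : (0:ℝ) ≤ Real.exp x - 1 := by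
    have := Real.one_le_exp hx.le
    linarith
  have hxle : x ≤ arsinhp p (Real.exp x - 1) := by
    have h := log_le_arsinhp hp hs₀
    rwa [show (1:ℝ) + (Real.exp x - 1) = Real.exp x by ring, Real.log_exp] at h
  have hmem : x ∈ arsinhp p '' Icc 0 (Real.exp x - 1) := by
    apply intermediate_value_Icc hs₀ ((arsinhp_contOn hp).mono Icc_subset_Ici_self)
    rw [arsinhp_zero]
    exact ⟨hx.le, hxle⟩
  obtain ⟨a, ha, hax⟩ := hmem
  have hex : ∃ a ∈ Ici (0:ℝ), arsinhp p a = x := ⟨a, ha.1, hax⟩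
  have h1 : sinhp p x ∈ Ici (0:ℝ) := Function.invFunOn_mem hex
  have h2 : arsinhp p (sinhp p x) = x := Function.invFunOn_eq hex
  refine ⟨?_, h2⟩
  rcases eq_or_lt_of_le (mem_Ici.1 h1) with h | h
  · exfalso
    rw [← h, arsinhp_zero] at h2
    exact hx.ne h2
  · exact h

lemma phi_pos (hp1 : 1 < p) (hp2 : p ≤ 2) {c : ℝ} (hc : 1 < c) :
    (1 + p) * c ^ (2 - p) < c ^ 2 + p * (1 - p) * c + p ^ 2 := by
  have hmono : StrictMonoOn
      (fun c : ℝ => c ^ 2 + p * (1 - p) * c + p ^ 2 - (1 + p) * c ^ (2 - p)) (Ici 1) := by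
    apply strictMonoOn_of_deriv_pos (convex_Ici 1)
    · intro c hc'
      have hc0 : (0:ℝ) < c := lt_of_lt_of_le zero_lt_one hc'
      have h1 : ContinuousAt (fun c : ℝ => c ^ 2 + p * (1 - p) * c + p ^ 2) c := by fun_prop
      have h2 : ContinuousAt (fun c : ℝ => (1 + p) * c ^ (2 - p)) c :=
        continuousAt_const.mul (Real.continuousAt_rpow_const _ _ (Or.inl hc0.ne'))
      exact (h1.sub h2).continuousWithinAt
    · intro c hc'
      rw [interior_Ici] at hc'
      have hc1 : (1:ℝ) < c := hc'
      have hc0 : (0:ℝ) < c := lt_trans zero_lt_one hc1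
      have ha : HasDerivAt (fun c : ℝ => c ^ 2) (2 * c) c := by
        simpa using hasDerivAt_pow 2 c
      have hb : HasDerivAt (fun c : ℝ => p * (1 - p) * c) (p * (1 - p)) c := by
        simpa using (hasDerivAt_id c).const_mul (p * (1 - p))
      have hd : HasDerivAt (fun c : ℝ => c ^ (2 - p)) ((2 - p) * c ^ (2 - p - 1)) c :=
        Real.hasDerivAt_rpow_const (Or.inl hc0.ne')
      have hF : HasDerivAt
          (fun c : ℝ => c ^ 2 + p * (1 - p) * c + p ^ 2 - (1 + p) * c ^ (2 - p))
          (2 * c + p * (1 - p) - (1 + p) * ((2 - p) * c ^ (2 - p - 1))) c :=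
        ((ha.add hb).add_const (p ^ 2)).sub (hd.const_mul (1 + p))
      rw [hF.deriv]
      have hcp : c ^ (2 - p - 1) ≤ 1 :=
        Real.rpow_le_one_of_one_le_of_nonpos hc1.le (by linarith)
      have h2p : (0:ℝ) ≤ (1 + p) * (2 - p) := by nlinarith
      nlinarith [mul_le_of_le_one_right h2p hcp]
  have h := hmono (mem_Ici.2 le_rfl) (mem_Ici.2 hc.le) hc
  norm_num [Real.one_rpow] at h
  linarith

lemma key_arsinh (hp1 : 1 < p) (hp2 : p ≤ 2) {s : ℝ} (hs : 0 < s) :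
    (1 + p) * s / ((1 + s ^ p) ^ (1/p) + p) < arsinhp p s := by
  have hp0 : (0:ℝ) < p := by linarith
  set g : ℝ → ℝ := fun s => arsinhp p s - (1 + p) * s / ((1 + s ^ p) ^ (1/p) + p) with hgdef
  have hcont : ContinuousOn g (Ici 0) := by
    intro t ht
    have ht0 : (0:ℝ) ≤ t := ht
    have hup : (0:ℝ) < 1 + t ^ p := aux_base_pos hp1 (by linarith)
    have hcpos : (0:ℝ) < (1 + t ^ p) ^ (1/p) := Real.rpow_pos_of_pos hup _
    have hbase : ContinuousAt (fun t : ℝ => 1 + t ^ p) t :=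
      continuousAt_const.add (Real.continuousAt_rpow_const t p (Or.inr hp0.le))
    have hden : ContinuousAt (fun t : ℝ => (1 + t ^ p) ^ (1/p) + p) t :=
      (hbase.rpow_const (Or.inl hup.ne')).add continuousAt_const
    have hh : ContinuousAt (fun t : ℝ => (1 + p) * t / ((1 + t ^ p) ^ (1/p) + p)) t :=
      (continuousAt_const.mul continuousAt_id).div hden (by positivity)
    exact (((arsinhp_hasDerivAt hp1 ht0).continuousAt).sub hh).continuousWithinAt
  have hg' : ∀ t ∈ interior (Ici (0:ℝ)), 0 < deriv g t := by
    rw [interior_Ici]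
    intro t ht
    have ht0 : (0:ℝ) < t := ht
    have hup : (0:ℝ) < 1 + t ^ p := aux_base_pos hp1 (by linarith)
    have hcpos : (0:ℝ) < (1 + t ^ p) ^ (1/p) := Real.rpow_pos_of_pos hup _
    have hc1 : (1:ℝ) < (1 + t ^ p) ^ (1/p) := by
      have htp : (0:ℝ) < t ^ p := Real.rpow_pos_of_pos ht0 p
      exact (Real.one_lt_rpow_iff_of_pos hup).2 (Or.inl ⟨by linarith, by positivity⟩)
    have hu' : HasDerivAt (fun t : ℝ => 1 + t ^ p) (p * t ^ (p - 1)) t :=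
      (Real.hasDerivAt_rpow_const (Or.inl ht0.ne')).const_add 1
    have hc' : HasDerivAt (fun t : ℝ => (1 + t ^ p) ^ (1/p) + p)
        ((p * t ^ (p - 1)) * (1/p) * (1 + t ^ p) ^ (1/p - 1)) t :=
      (hu'.rpow_const (Or.inl hup.ne')).add_const p
    have hnum : HasDerivAt (fun t : ℝ => (1 + p) * t) (1 + p) t := by
      simpa using (hasDerivAt_id t).const_mul (1 + p)
    have hdiv : HasDerivAt (fun t : ℝ => (1 + p) * t / ((1 + t ^ p) ^ (1/p) + p))
        (((1 + p) * ((1 + t ^ p) ^ (1/p) + p) -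
          (1 + p) * t * ((p * t ^ (p - 1)) * (1/p) * (1 + t ^ p) ^ (1/p - 1))) /
          ((1 + t ^ p) ^ (1/p) + p) ^ 2) t :=
      hnum.div hc' (by positivity)
    have hg : HasDerivAt g ((1 + t ^ p) ^ (-1 / p) -
        ((1 + p) * ((1 + t ^ p) ^ (1/p) + p) -
          (1 + p) * t * ((p * t ^ (p - 1)) * (1/p) * (1 + t ^ p) ^ (1/p - 1))) /
          ((1 + t ^ p) ^ (1/p) + p) ^ 2) t :=
      (arsinhp_hasDerivAt hp1 ht0.le).sub hdiv
    rw [hg.deriv]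
    -- rewrite rpow identities
    have e1 : (1 + t ^ p) ^ (-1 / p) = ((1 + t ^ p) ^ (1/p))⁻¹ := by
      rw [neg_div, Real.rpow_neg hup.le]
    have e2 : (1 + t ^ p) ^ (1/p - 1) = (1 + t ^ p) ^ (1/p) / (1 + t ^ p) := by
      rw [Real.rpow_sub hup, Real.rpow_one]
    have e3 : t ^ (p - 1) = t ^ p / t := by
      rw [Real.rpow_sub ht0, Real.rpow_one]
    rw [e1, e2, e3]
    -- key algebraic inequality
    have hcu : ((1 + t ^ p) ^ (1/p)) ^ p = 1 + t ^ p := by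
      rw [← Real.rpow_mul hup.le, one_div_mul_cancel hp0.ne', Real.rpow_one]
    have hkey : (1 + p) * ((1 + t ^ p) ^ (1/p)) ^ 2 <
        (((1 + t ^ p) ^ (1/p)) ^ 2 + p * (1 - p) * ((1 + t ^ p) ^ (1/p)) + p ^ 2)
          * (1 + t ^ p) := by
      have h1 := phi_pos hp1 hp2 hc1
      have h2 : ((1 + t ^ p) ^ (1/p)) ^ (2 - p)
          = ((1 + t ^ p) ^ (1/p)) ^ 2 / (1 + t ^ p) := by
        rw [Real.rpow_sub hcpos, hcu, Real.rpow_two]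
      rw [h2, ← mul_div_assoc] at h1
      exact (div_lt_iff₀ hup).mp h1
    -- clear denominators
    have hden : (0:ℝ) < (1 + t ^ p) ^ (1/p) + p := by positivity
    have heq : ((1 + t ^ p) ^ (1/p))⁻¹ -
        ((1 + p) * ((1 + t ^ p) ^ (1/p) + p) -
          (1 + p) * t * ((p * (t ^ p / t)) * (1/p) * ((1 + t ^ p) ^ (1/p) / (1 + t ^ p)))) /
          ((1 + t ^ p) ^ (1/p) + p) ^ 2
        = ((((1 + t ^ p) ^ (1/p)) ^ 2 + p * (1 - p) * ((1 + t ^ p) ^ (1/p)) + p ^ 2)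
            * (1 + t ^ p) - (1 + p) * ((1 + t ^ p) ^ (1/p)) ^ 2)
          / ((1 + t ^ p) ^ (1/p) * (1 + t ^ p) * ((1 + t ^ p) ^ (1/p) + p) ^ 2) := by
      field_simp
      ring
    rw [heq]
    exact div_pos (by linarith) (by positivity)
  have hmono := strictMonoOn_of_deriv_pos (convex_Ici 0) hcont hg'
  have h := hmono (self_mem_Ici) (mem_Ici.2 hs.le) hs
  have hg0 : g 0 = 0 := by
    simp [hgdef, arsinhp_zero]
  rw [hg0] at h
  simp only [hgdef] at h
  linarith

end Aux

theorem stmt12 (p : ℝ) (hp1 : 1 < p) (hp2 : p ≤ 2) :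
    ∀ x > (0:ℝ), sinhp p x / x < (coshp p x + p) / (1 + p) := by
  intro x hx
  obtain ⟨hspos, hseq⟩ := sinhp_spec hp1 hx
  set s := sinhp p x with hsdef
  have hkey := key_arsinh hp1 hp2 hspos
  rw [hseq] at hkey
  have hup : (0:ℝ) < 1 + s ^ p := aux_base_pos hp1 (by linarith)
  have hcpos : (0:ℝ) < (1 + s ^ p) ^ (1/p) := Real.rpow_pos_of_pos hup _
  have hcosh : coshp p x = (1 + s ^ p) ^ (1/p) := rfl
  rw [hcosh, div_lt_div_iff₀ hx (by linarith : (0:ℝ) < 1 + p)]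
  have h2 : (1 + p) * s < x * ((1 + s ^ p) ^ (1/p) + p) :=
    (div_lt_iff₀ (by linarith)).mp hkey
  linarith
end
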